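/- arXiv:1707.02171 — 4 statements merged into one kernel-verified Lean document; each statement's English description precedes it below -/
import Mathlib

section
/- Let G be a partially directed acyclic graph (PDAG) and let p* be a path from X to Y in G that is b-non-causal (i.e., G contains an edge V_i ← V_j for some nodes V_i, V_j on p* with i < j in the path order). Then for every DAG D with the same node set and adjacencies as G, the same unshielded colliders, and containing every directed edge of G, the path in D corresponding to p* is non-causal (contains at least one edge directed towards X along the path). -/
/-- A partially directed graph with at most one edge between any two nodes
and no directed cycles (a PDAG). -/
structure PDAG (V : Type) where
  dir : V → V → Prop
  undir : V → V → Prop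
  undir_symm : ∀ {x y}, undir x y → undir y x
  undir_irrefl : ∀ x, ¬ undir x x
  dir_not_undir : ∀ x y, dir x y → ¬ undir x y
  acyclic : ∀ x, ¬ Relation.TransGen dir x x

namespace PDAG

variable {V : Type}

/-- There is an undirected edge between `x` and `y`. -/
def undirE (G : PDAG V) (x y : V) : Prop := G.undir x y ∨ G.undir y x

/-- `x` and `y` are adjacent. -/
def adj (G : PDAG V) (x y : V) : Prop := G.dir x y ∨ G.dir y x ∨ G.undirE x y

/-- The list of consecutive pairs of a list. -/
def consPairs (p : List V) : List (V × V) := p.zip p.tail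

/-- The list of consecutive triples of a list. -/
def triples : List V → List (V × V × V)
  | a :: b :: c :: rest => (a, b, c) :: triples (b :: c :: rest)
  | _ => []

/-- `p` is a path in `G`: at least two distinct nodes, pairwise successive adjacency. -/
def IsPath (G : PDAG V) (p : List V) : Prop :=
  2 ≤ p.length ∧ p.Nodup ∧ ∀ e ∈ consPairs p, G.adj e.1 e.2

/-- `p` is a path in `G` from `x` to `y`. -/
def PathFromTo (G : PDAG V) (p : List V) (x y : V) : Prop :=
  G.IsPath p ∧ p.head? = some x ∧ p.getLast? = some y

/-- `p` is a causal (fully directed) path in `G`. -/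
def IsCausal (G : PDAG V) (p : List V) : Prop :=
  2 ≤ p.length ∧ p.Nodup ∧ ∀ e ∈ consPairs p, G.dir e.1 e.2

/-- `p` is a non-causal path: it contains at least one edge directed backwards. -/
def NonCausal (G : PDAG V) (p : List V) : Prop :=
  G.IsPath p ∧ ∃ e ∈ consPairs p, G.dir e.2 e.1

/-- `p` is b-possibly causal in `G`: there is no edge `V_i ← V_j` for `i < j`. -/
def BPossCausal (G : PDAG V) (p : List V) : Prop :=
  G.IsPath p ∧ ∀ i j : Fin p.length, (i : ℕ) < (j : ℕ) → ¬ G.dir (p.get j) (p.get i)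

/-- `p` is b-non-causal in `G`: some edge `V_i ← V_j` with `i < j` exists in `G`. -/
def BNonCausal (G : PDAG V) (p : List V) : Prop :=
  G.IsPath p ∧ ∃ i j : Fin p.length, (i : ℕ) < (j : ℕ) ∧ G.dir (p.get j) (p.get i)

/-- A path with no edge on it pointing backwards (possibly causal in the local sense). -/
def LocalPossCausal (G : PDAG V) (p : List V) : Prop :=
  G.IsPath p ∧ ∀ e ∈ consPairs p, ¬ G.dir e.2 e.1

/-- `p` is unshielded: the outer nodes of every consecutive triple are non-adjacent. -/
def Unshielded (G : PDAG V) (p : List V) : Prop :=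
  ∀ t ∈ triples p, ¬ G.adj t.1 t.2.2

/-- The middle node of a triple is a collider. -/
def ColliderAt (G : PDAG V) (t : V × V × V) : Prop :=
  G.dir t.1 t.2.1 ∧ G.dir t.2.2 t.2.1

/-- The middle node of a triple is a definite non-collider. -/
def DefNonColliderAt (G : PDAG V) (t : V × V × V) : Prop :=
  G.dir t.2.1 t.1 ∨ G.dir t.2.1 t.2.2 ∨
    (G.undirE t.1 t.2.1 ∧ G.undirE t.2.1 t.2.2 ∧ ¬ G.adj t.1 t.2.2)

/-- `p` is a definite status path. -/
def DefiniteStatus (G : PDAG V) (p : List V) : Prop :=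
  ∀ t ∈ triples p, G.ColliderAt t ∨ G.DefNonColliderAt t

/-- `y` is a descendant of `x` in `G` (via directed paths; every node descends from itself). -/
def Desc (G : PDAG V) (x y : V) : Prop := x = y ∨ Relation.TransGen G.dir x y

/-- `p` is d-connecting given `Z`: every collider on `p` has a descendant in `Z`,
and every (definite) non-collider on `p` is not in `Z`. -/
def DConn (G : PDAG V) (p : List V) (Z : Set V) : Prop :=
  ∀ t ∈ triples p,
    (G.ColliderAt t → ∃ z ∈ Z, G.Desc t.2.1 z) ∧ (¬ G.ColliderAt t → t.2.1 ∉ Z)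

/-- `Z` blocks the path `p`. -/
def Blocked (G : PDAG V) (p : List V) (Z : Set V) : Prop := ¬ G.DConn p Z

/-- `G` is closed under Meek's orientation rules R1–R4 (a maximal PDAG). -/
def ClosedMeek (G : PDAG V) : Prop :=
  (∀ a b c, G.dir a b → G.undirE b c → ¬ G.adj a c → G.dir b c) ∧
  (∀ a b c, G.dir a b → G.dir b c → G.undirE a c → G.dir a c) ∧
  (∀ a b c d, G.undirE a b → G.undirE a c → G.undirE a d →
     G.dir c b → G.dir d b → ¬ G.adj c d → G.dir a b) ∧
  (∀ a b c d, G.undirE a b → G.undirE a c → G.undirE a d →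
     G.dir d c → G.dir b d → ¬ G.adj b c → G.dir a c)

/-- `G` is a DAG: it has no undirected edges. -/
def IsDAG (G : PDAG V) : Prop := ∀ x y, ¬ G.undir x y

/-- `G` and `H` have the same unshielded colliders. -/
def SameUC (G H : PDAG V) : Prop :=
  ∀ a b c, (G.dir a b ∧ G.dir c b ∧ ¬ G.adj a c) ↔ (H.dir a b ∧ H.dir c b ∧ ¬ H.adj a c)

/-- `H` is represented by `G`: same adjacencies, same unshielded colliders,
and every directed edge of `G` is in `H`. -/
def RepresentedBy (H G : PDAG V) : Prop :=
  (∀ x y, H.adj x y ↔ G.adj x y) ∧ SameUC H G ∧ ∀ x y, G.dir x y → H.dir x y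

/-- `p` is a proper path from (a member of) `X` to (a member of) `Y`:
only its first node lies in `X`. -/
def ProperPathFromTo (G : PDAG V) (X Y : Set V) (p : List V) : Prop :=
  G.IsPath p ∧ (∃ x ∈ X, p.head? = some x) ∧ (∃ y ∈ Y, p.getLast? = some y) ∧
    ∀ v ∈ p.tail, v ∉ X

/-- `w'` is a b-possible descendant of the node `w`. -/
def BPossDescNode (G : PDAG V) (w w' : V) : Prop :=
  w' = w ∨ ∃ p, G.BPossCausal p ∧ p.head? = some w ∧ p.getLast? = some w'

/-- The b-possible descendants of the node set `X` in `G`. -/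
def BPossDe (G : PDAG V) (X : Set V) : Set V :=
  {w | w ∈ X ∨ ∃ x ∈ X, ∃ p, G.BPossCausal p ∧ p.head? = some x ∧ p.getLast? = some w}

/-- The b-possible ancestors of the node set `X` in `G`. -/
def BPossAn (G : PDAG V) (X : Set V) : Set V :=
  {w | w ∈ X ∨ ∃ x ∈ X, ∃ p, G.BPossCausal p ∧ p.head? = some w ∧ p.getLast? = some x}

/-- The b-forbidden set relative to `(X, Y)` in `G`. -/
def BForb (G : PDAG V) (X Y : Set V) : Set V :=
  {w' | ∃ w p, w ∉ X ∧ G.ProperPathFromTo X Y p ∧ G.BPossCausal p ∧ w ∈ p ∧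
    G.BPossDescNode w w'}

/-- `G` is b-amenable relative to `(X, Y)`: every proper b-possibly causal path
from `X` to `Y` starts with a directed edge out of `X`. -/
def BAmenable (G : PDAG V) (X Y : Set V) : Prop :=
  ∀ p, G.ProperPathFromTo X Y p → G.BPossCausal p →
    ∀ a b, p.head? = some a → p.tail.head? = some b → G.dir a b

/-- The b-blocking condition: `Z` blocks every proper b-non-causal definite status
path from `X` to `Y` in `G`. -/
def BBlocking (G : PDAG V) (X Y Z : Set V) : Prop :=
  ∀ p, G.ProperPathFromTo X Y p → G.BNonCausal p → G.DefiniteStatus p → G.Blocked p Z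

/-- The b-adjustment criterion for `Z` relative to `(X, Y)` in `G`. -/
def BAdjCrit (G : PDAG V) (X Y Z : Set V) : Prop :=
  G.BAmenable X Y ∧ Z ∩ G.BForb X Y = ∅ ∧ G.BBlocking X Y Z

/-- In a DAG: `Z` blocks every proper non-causal path from `X` to `Y`. -/
def DagBlocking (D : PDAG V) (X Y Z : Set V) : Prop :=
  ∀ p, D.ProperPathFromTo X Y p → D.NonCausal p → D.Blocked p Z

/-- The canonical adjustment set `b-Adjust(X, Y, G)`. -/
def BAdjust (G : PDAG V) (X Y : Set V) : Set V :=
  G.BPossAn (X ∪ Y) \ (X ∪ Y ∪ G.BForb X Y)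

/-- `C` is a CPDAG: a maximal PDAG representing a Markov equivalence class of DAGs
in which every undirected edge is realized in both orientations by represented DAGs. -/
def IsCPDAG (C : PDAG V) : Prop :=
  C.ClosedMeek ∧ (∃ D : PDAG V, D.IsDAG ∧ RepresentedBy D C) ∧
  ∀ x y, C.undirE x y →
    (∃ D : PDAG V, D.IsDAG ∧ RepresentedBy D C ∧ D.dir x y) ∧
    (∃ D : PDAG V, D.IsDAG ∧ RepresentedBy D C ∧ D.dir y x)

end PDAG

/-- If a path `p` from `X` to `Y` in a PDAG `G` is b-non-causal, then in
every DAG `D` represented by `G` the corresponding path is non-causal. -/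
theorem stmt0 {V : Type} (G D : PDAG V) (X Y : V) (p : List V)
    (hp : G.PathFromTo p X Y) (hnc : G.BNonCausal p)
    (hD : D.IsDAG) (hrep : PDAG.RepresentedBy D G) :
    D.NonCausal p := by
  obtain ⟨hpath, hx, hy⟩ := hp
  obtain ⟨_, i, j, hij, hdir⟩ := hnc
  obtain ⟨hlen, hnd, hadj⟩ := hpath
  have hadjD : ∀ e ∈ PDAG.consPairs p, D.adj e.1 e.2 := fun e he => (hrep.1 _ _).2 (hadj e he)
  have hDpath : D.IsPath p := ⟨hlen, hnd, hadjD⟩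
  refine ⟨hDpath, ?_⟩
  by_contra hno
  push_neg at hno
  have hfwd : ∀ e ∈ PDAG.consPairs p, D.dir e.1 e.2 := by
    intro e he
    rcases hadjD e he with h | h | h
    · exact h
    · exact absurd h (hno e he)
    · rcases h with h | h
      · exact absurd h (hD _ _)
      · exact absurd h (hD _ _)
  have hmem : ∀ k (hk : k + 1 < p.length),
      (p[k]'(Nat.lt_of_succ_lt hk), p[k+1]'hk) ∈ PDAG.consPairs p := by
    intro k hk
    have hk' : k < (p.zip p.tail).length := by
      rw [List.length_zip, List.length_tail]
      exact lt_min (Nat.lt_of_succ_lt hk) (Nat.lt_sub_of_add_lt hk)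
    have : (p.zip p.tail)[k]'hk' = (p[k]'(Nat.lt_of_succ_lt hk), p[k+1]'hk) := by
      rw [List.getElem_zip, List.getElem_tail]
    have hm := List.getElem_mem hk'
    rw [this] at hm
    exact hm
  have chain : ∀ j (hj : j < p.length) i (hi : i < j),
      Relation.TransGen D.dir (p[i]'(Nat.lt_trans hi hj)) (p[j]'hj) := by
    intro j
    induction j with
    | zero => intro _ i hi; omega
    | succ n ih =>
      intro hj i hi
      have hstep : D.dir (p[n]'(Nat.lt_of_succ_lt hj)) (p[n+1]'hj) :=
        hfwd _ (hmem n hj)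
      rcases Nat.lt_or_ge i n with h | h
      · exact (ih (Nat.lt_of_succ_lt hj) i h).tail hstep
      · have : i = n := le_antisymm (Nat.lt_succ_iff.mp hi) h
        subst this
        exact Relation.TransGen.single hstep
  have hDdir : D.dir (p.get j) (p.get i) := hrep.2.2 _ _ hdir
  have hij' : (i : ℕ) < (j : ℕ) := hij
  have hch := chain j j.isLt i hij'
  have : Relation.TransGen D.dir (p.get j) (p.get j) := by
    refine Relation.TransGen.head hDdir ?_
    simpa using hch
  exact D.acyclic _ this
end

section
/- Let X and Y be distinct nodes in a maximal PDAG G. If p is a b-possibly causal path from X to Y in G, then some subsequence p* of p forms a b-possibly causal unshielded path from X to Y in G. -/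
namespace PDAG

variable {V : Type}

theorem consPairs_cons_cons (a b : V) (l : List V) :
    consPairs (a :: b :: l) = (a, b) :: consPairs (b :: l) := rfl

theorem consPairs_append (s : List V) (x : V) (l : List V) :
    consPairs (s ++ x :: l) = consPairs (s ++ [x]) ++ consPairs (x :: l) := by
  induction s with
  | nil => rfl
  | cons a s ih =>
    cases s with
    | nil => rfl
    | cons b s' =>
      simp only [List.cons_append, consPairs_cons_cons] at *
      rw [ih]

theorem mem_triples_decomp {q : List V} {t : V × V × V} (h : t ∈ triples q) :
    ∃ s u, q = s ++ t.1 :: t.2.1 :: t.2.2 :: u := by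
  induction q with
  | nil => simp [triples] at h
  | cons a q ih =>
    cases q with
    | nil => simp [triples] at h
    | cons b q' =>
      cases q' with
      | nil => simp [triples] at h
      | cons c rest =>
        rw [triples] at h
        rcases List.mem_cons.1 h with h | h
        · subst h; exact ⟨[], rest, rfl⟩
        · obtain ⟨s, u, hq⟩ := ih h
          exact ⟨a :: s, u, by rw [List.cons_append, ← hq]⟩

theorem noback_sublist {G : PDAG V} {p q : List V} (hsub : q.Sublist p)
    (hp : ∀ i j : Fin p.length, (i : ℕ) < (j : ℕ) → ¬ G.dir (p.get j) (p.get i)) :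
    ∀ i j : Fin q.length, (i : ℕ) < (j : ℕ) → ¬ G.dir (q.get j) (q.get i) := by
  obtain ⟨f, hf⟩ := List.sublist_iff_exists_fin_orderEmbedding_get_eq.1 hsub
  intro i j hij
  rw [hf i, hf j]
  exact hp (f i) (f j) (f.strictMono (show i < j from hij))

theorem exists_unshielded (G : PDAG V) (X Y : V) :
    ∀ n (q : List V), q.length ≤ n → G.PathFromTo q X Y →
      ∃ r, r.Sublist q ∧ G.PathFromTo r X Y ∧ G.Unshielded r := by
  intro n
  induction n with
  | zero =>
    intro q hq hpath
    have := hpath.1.1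
    omega
  | succ n ih =>
    intro q hq hpath
    by_cases hu : G.Unshielded q
    · exact ⟨q, List.Sublist.refl q, hpath, hu⟩
    · simp only [Unshielded, not_forall] at hu
      obtain ⟨t, ht, hadj⟩ := hu
      rw [not_not] at hadj
      obtain ⟨a, b, c⟩ := t
      obtain ⟨s, u, rfl⟩ := mem_triples_decomp ht
      obtain ⟨⟨hlen, hnodup, hadjall⟩, hhead, hlast⟩ := hpath
      have hsub : (s ++ a :: c :: u).Sublist (s ++ a :: b :: c :: u) := by
        refine (List.Sublist.refl s).append ?_
        exact List.Sublist.cons₂ a ((c :: u).sublist_cons_self b)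
      have hpath' : G.PathFromTo (s ++ a :: c :: u) X Y := by
        refine ⟨⟨?_, hsub.nodup hnodup, ?_⟩, ?_, ?_⟩
        · simp only [List.length_append, List.length_cons]; omega
        · intro e he
          rw [consPairs_append s a (c :: u)] at he
          have hq2 : consPairs (s ++ a :: b :: c :: u)
              = consPairs (s ++ [a]) ++ (a, b) :: (b, c) :: consPairs (c :: u) := by
            rw [consPairs_append s a (b :: c :: u)]; rfl
          rcases List.mem_append.1 he with he | he
          · exact hadjall e (by rw [hq2]; exact List.mem_append_left _ he)
          · rcases List.mem_cons.1 he with rfl | he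
            · exact hadj
            · refine hadjall e ?_
              rw [hq2]
              exact List.mem_append_right _
                (List.mem_cons_of_mem _ (List.mem_cons_of_mem _ he))
        · cases s with
          | nil => simpa using hhead
          | cons x s' => simpa using hhead
        · rw [List.getLast?_append_of_ne_nil s (by simp)] at hlast ⊢
          simpa [List.getLast?_cons_cons] using hlast
      have hlen' : (s ++ a :: c :: u).length ≤ n := by
        simp only [List.length_append, List.length_cons] at hq ⊢
        omega
      obtain ⟨r, hrsub, hrpath, hrun⟩ := ih (s ++ a :: c :: u) hlen' hpath'
      exact ⟨r, hrsub.trans hsub, hrpath, hrun⟩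

end PDAG

/-- every b-possibly causal path from `X` to `Y` in a maximal PDAG has a
subsequence forming a b-possibly causal unshielded path from `X` to `Y`. -/
theorem stmt2 {V : Type} (G : PDAG V) (hG : G.ClosedMeek) (X Y : V) (hXY : X ≠ Y)
    (p : List V) (hp : G.PathFromTo p X Y) (hpc : G.BPossCausal p) :
    ∃ q : List V, q.Sublist p ∧ G.PathFromTo q X Y ∧ G.BPossCausal q ∧ G.Unshielded q := by
  obtain ⟨r, hrsub, hrpath, hrun⟩ := PDAG.exists_unshielded G X Y p.length p le_rfl hp
  exact ⟨r, hrsub, hrpath, ⟨hrpath.1, PDAG.noback_sublist hrsub hpc.2⟩, hrun⟩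
end

section
/- Let X, Y, Z be pairwise disjoint node sets in a maximal PDAG G such that G is b-amenable relative to (X,Y) and Z ∩ b-Forb(X,Y,G) = ∅. Let D be a DAG represented by G and let p = ⟨X = V_0, V_1, …, V_k = Y⟩ be a proper non-causal path in D from X ∈ X to Y ∈ Y that is d-connecting given Z. If 0 < i < j ≤ k and G contains an edge between V_i and V_j, then the path p*(X, V_i) ⊕ ⟨V_i, V_j⟩ ⊕ p*(V_j, Y) in G (where p* is the path in G corresponding to p) is a proper b-non-causal path in G. In particular, taking j = i+1, p* itself is a proper b-non-causal path in G. -/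
/-!
Write `q` for the spliced path. It is a sublist of `p` with the same endpoints and every edge
of `q` is an edge of `G`, so `q` is a proper path of `G`; since `0 < i`, it starts with the
first edge `⟨V₀, V₁⟩` of `p`. If `q` were b-possibly causal, b-amenability would orient that
edge `V₀ → V₁` in `G`, hence in `D`. Walking along `p` from `V₁` to its first backward edge
then ends at a collider, which has a descendant `z ∈ Z` because `p` is d-connecting. Directed
paths of `D` are b-possibly causal in `G`, so `z` is a b-possible descendant of `V₁ ∈ q \ X`,
i.e. `z ∈ Z ∩ b-Forb(X, Y, G)`. Taking `q = p` gives the second claim.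
-/

theorem List.take_append_drop_sublist {α : Type*} {l : List α} {i j : ℕ} (hij : i ≤ j) :
    (l.take i ++ l.drop j).Sublist l := by
  simpa using (List.drop_sublist_drop_left l hij).append_left (l.take i)

namespace PDAG

variable {V : Type}

theorem forall_mem_consPairs_iff_isChain {R : V → V → Prop} :
    ∀ {p : List V}, (∀ e ∈ consPairs p, R e.1 e.2) ↔ p.IsChain R
  | [] | [_] => by simp [consPairs]
  | a :: b :: l => by
    rw [consPairs_cons_cons, List.forall_mem_cons, forall_mem_consPairs_iff_isChain,
      List.isChain_cons_cons]

theorem triples_cons_cons_cons (a b c : V) (l : List V) :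
    triples (a :: b :: c :: l) = (a, b, c) :: triples (b :: c :: l) := rfl

theorem isPath_iff {G : PDAG V} {p : List V} :
    G.IsPath p ↔ 2 ≤ p.length ∧ p.Nodup ∧ p.IsChain G.adj := by
  rw [IsPath, forall_mem_consPairs_iff_isChain]

theorem IsDAG.dir_or_dir_of_adj {D : PDAG V} (hD : D.IsDAG) {x y : V} (h : D.adj x y) :
    D.dir x y ∨ D.dir y x := by
  rcases h with h | h | h | h
  exacts [.inl h, .inr h, (hD x y h).elim, (hD y x h).elim]

theorem Desc.head {D : PDAG V} {a b z : V} (hab : D.dir a b) (hbz : D.Desc b z) :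
    D.Desc a z := by
  rcases hbz with rfl | hbz
  exacts [.inr (.single hab), .inr (.head hab hbz)]

theorem IsPath.of_adj_iff {G H : PDAG V} (hadj : ∀ x y, H.adj x y ↔ G.adj x y) {p : List V}
    (hp : H.IsPath p) : G.IsPath p := by
  rw [isPath_iff] at hp ⊢
  exact ⟨hp.1, hp.2.1, hp.2.2.imp fun x y => (hadj x y).mp⟩

theorem ProperPathFromTo.of_representedBy {D G : PDAG V} (hrep : RepresentedBy D G)
    {X Y : Set V} {p : List V} (hp : D.ProperPathFromTo X Y p) : G.ProperPathFromTo X Y p :=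
  ⟨hp.1.of_adj_iff hrep.1, hp.2⟩

theorem bPossCausal_of_isChain_dir {D G : PDAG V} (hrep : RepresentedBy D G) {p : List V}
    (hlen : 2 ≤ p.length) (hp : p.IsChain D.dir) : G.BPossCausal p := by
  have hpw : p.Pairwise (Relation.TransGen D.dir) :=
    List.isChain_iff_pairwise.mp (hp.imp fun _ _ => .single)
  have hnodup : p.Nodup := hpw.imp fun h => by rintro rfl; exact D.acyclic _ h
  refine ⟨isPath_iff.mpr ⟨hlen, hnodup, hp.imp fun x y h => (hrep.1 x y).mp (.inl h)⟩, ?_⟩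
  intro i j hij hji
  exact D.acyclic _ ((List.pairwise_iff_get.mp hpw i j hij).tail (hrep.2.2 _ _ hji))

theorem bPossDescNode_of_desc {D G : PDAG V} (hrep : RepresentedBy D G) {w z : V}
    (h : D.Desc w z) : G.BPossDescNode w z := by
  rcases h with rfl | h
  · exact .inl rfl
  obtain ⟨l, hchain, hlast⟩ := List.exists_isChain_cons_of_relationReflTransGen h.to_reflTransGen
  have hl : l ≠ [] := by
    rintro rfl
    rw [List.getLast_singleton] at hlast
    exact D.acyclic w (hlast ▸ h)
  refine .inr ⟨w :: l, bPossCausal_of_isChain_dir hrep ?_ hchain, rfl, ?_⟩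
  · simpa [Nat.succ_le_iff, List.length_pos_iff] using hl
  · rw [List.getLast?_eq_some_getLast (List.cons_ne_nil w l), hlast]

theorem exists_desc_mem_of_dConn {D : PDAG V} (hD : D.IsDAG) {Z : Set V} :
    ∀ {a b : V} {l : List V}, (a :: b :: l).IsChain D.adj → D.dir a b →
      D.DConn (a :: b :: l) Z → (∃ e ∈ consPairs (a :: b :: l), D.dir e.2 e.1) →
      ∃ z ∈ Z, D.Desc b z
  | a, b, [], _, hab, _, hback => by
    simp only [consPairs_cons_cons, List.mem_cons] at hback
    obtain ⟨e, rfl | he, hba⟩ := hback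
    · exact (D.acyclic a (.tail (.single hab) hba)).elim
    · simp [consPairs] at he
  | a, b, c :: l, hadj, hab, hconn, hback => by
    rw [List.isChain_cons_cons] at hadj
    rcases hD.dir_or_dir_of_adj hadj.2.rel with hbc | hcb
    · have hconn' : D.DConn (b :: c :: l) Z := fun t ht =>
        hconn t (by rw [triples_cons_cons_cons]; exact List.mem_cons_of_mem _ ht)
      have hback' : ∃ e ∈ consPairs (b :: c :: l), D.dir e.2 e.1 := by
        obtain ⟨e, he, heb⟩ := hback
        rw [consPairs_cons_cons, List.mem_cons] at he
        rcases he with rfl | he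
        · exact (D.acyclic a (.tail (.single hab) heb)).elim
        · exact ⟨e, he, heb⟩
      obtain ⟨z, hz, hcz⟩ := exists_desc_mem_of_dConn hD hadj.2 hbc hconn' hback'
      exact ⟨z, hz, hcz.head hbc⟩
    · exact (hconn (a, b, c) (by simp [triples_cons_cons_cons])).1 ⟨hab, hcb⟩

theorem ProperPathFromTo.splice {G : PDAG V} {X Y : Set V} {p : List V}
    (hp : G.ProperPathFromTo X Y p) {i j : ℕ} (hij : i < j) (hj : j < p.length)
    (hadj : G.adj (p[i]'(hij.trans hj)) p[j]) :
    G.ProperPathFromTo X Y (p.take (i + 1) ++ p.drop j) := by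
  obtain ⟨hpath, hhead, hlast, htail⟩ := hp
  rw [isPath_iff] at hpath
  have htail_eq : (p.take (i + 1) ++ p.drop j).tail = p.tail.take i ++ p.tail.drop (j - 1) := by
    cases p with
    | nil => simp at hj
    | cons a p =>
      obtain ⟨j, rfl⟩ : ∃ j', j = j' + 1 := ⟨j - 1, by omega⟩
      simp
  have hlen : 2 ≤ (p.take (i + 1) ++ p.drop j).length := by
    simp only [List.length_append, List.length_take, List.length_drop]
    omega
  have hne : p ≠ [] := List.ne_nil_of_length_pos (by omega)
  refine ⟨isPath_iff.mpr ⟨hlen, ?_, ?_⟩, ?_, ?_, ?_⟩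
  · exact (List.take_append_drop_sublist hij).nodup hpath.2.1
  · refine List.isChain_append.mpr ⟨hpath.2.2.take _, hpath.2.2.drop _, ?_⟩
    simp [List.getLast?_take, List.head?_drop, hj, hij.trans hj, hadj]
  · simpa [List.head?_append, List.head?_take, hne] using hhead
  · simpa [List.getLast?_append, List.getLast?_drop, hj.not_ge, hne] using hlast
  · rw [htail_eq]
    exact fun v hv => htail v ((List.take_append_drop_sublist (by omega)).subset hv)

theorem bNonCausal_of_take_two_eq {G D : PDAG V} {X Y Z : Set V}
    (hamen : G.BAmenable X Y) (hforb : Z ∩ G.BForb X Y = ∅)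
    (hD : D.IsDAG) (hrep : RepresentedBy D G) {p q : List V}
    (hp : D.ProperPathFromTo X Y p) (hnc : D.NonCausal p) (hconn : D.DConn p Z)
    (hq : G.ProperPathFromTo X Y q) (hqp : q.take 2 = p.take 2) : G.BNonCausal q := by
  obtain ⟨a, b, l, rfl⟩ : ∃ a b l, p = a :: b :: l := by
    match p, hp.1.1 with
    | a :: b :: l, _ => exact ⟨a, b, l, rfl⟩
  obtain ⟨l', rfl⟩ : ∃ l', q = a :: b :: l' := by
    match q, hq.1.1 with
    | a' :: b' :: l', _ =>
      simp only [List.take_succ_cons, List.take_zero, List.cons.injEq] at hqp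
      obtain ⟨rfl, rfl, -⟩ := hqp
      exact ⟨l', rfl⟩
  refine ⟨hq.1, ?_⟩
  by_contra hback
  push Not at hback
  have hposs : G.BPossCausal (a :: b :: l') := ⟨hq.1, hback⟩
  have hab : D.dir a b := hrep.2.2 a b (hamen _ hq hposs a b rfl rfl)
  obtain ⟨z, hzZ, hbz⟩ := exists_desc_mem_of_dConn hD
    (forall_mem_consPairs_iff_isChain.mp hp.1.2.2) hab hconn hnc.2
  have hzF : z ∈ G.BForb X Y :=
    ⟨b, _, hp.2.2.2 b (by simp), hq, hposs, by simp, bPossDescNode_of_desc hrep hbz⟩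
  exact (Set.eq_empty_iff_forall_notMem.mp hforb) z ⟨hzZ, hzF⟩

end PDAG

theorem stmt8_general {V : Type} (G D : PDAG V) (X Y Z : Set V)
    (hamen : G.BAmenable X Y) (hforb : Z ∩ G.BForb X Y = ∅)
    (hD : D.IsDAG) (hrep : PDAG.RepresentedBy D G)
    (p : List V) (hp : D.ProperPathFromTo X Y p) (hnc : D.NonCausal p)
    (hconn : D.DConn p Z)
    (i j : ℕ) (h0 : 0 < i) (hij : i < j) (hj : j < p.length)
    (hadj : G.adj (p.get ⟨i, Nat.lt_trans hij hj⟩) (p.get ⟨j, hj⟩)) :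
    (G.ProperPathFromTo X Y (p.take (i + 1) ++ p.drop j) ∧
      G.BNonCausal (p.take (i + 1) ++ p.drop j)) ∧
    (G.ProperPathFromTo X Y p ∧ G.BNonCausal p) := by
  have hpG : G.ProperPathFromTo X Y p := hp.of_representedBy hrep
  have hsplice := hpG.splice hij hj hadj
  have hsplice_take : (p.take (i + 1) ++ p.drop j).take 2 = p.take 2 := by
    rw [List.take_append_of_le_length (by simp; omega), List.take_take]
    congr 1
    omega
  exact ⟨⟨hsplice, PDAG.bNonCausal_of_take_two_eq hamen hforb hD hrep hp hnc hconn hsplice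
      hsplice_take⟩,
    hpG, PDAG.bNonCausal_of_take_two_eq hamen hforb hD hrep hp hnc hconn hpG rfl⟩

/-- splicing a proper non-causal d-connecting path of a represented DAG
along an edge `⟨V_i, V_j⟩` of `G` yields a proper b-non-causal path in `G`; in particular
the corresponding path itself is proper and b-non-causal in `G`. -/
theorem stmt8 {V : Type} (G D : PDAG V) (hG : G.ClosedMeek) (X Y Z : Set V)
    (hdisj : Disjoint X Y ∧ Disjoint Z X ∧ Disjoint Z Y)
    (hamen : G.BAmenable X Y) (hforb : Z ∩ G.BForb X Y = ∅)
    (hD : D.IsDAG) (hrep : PDAG.RepresentedBy D G)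
    (p : List V) (hp : D.ProperPathFromTo X Y p) (hnc : D.NonCausal p)
    (hconn : D.DConn p Z)
    (i j : ℕ) (h0 : 0 < i) (hij : i < j) (hj : j < p.length)
    (hadj : G.adj (p.get ⟨i, Nat.lt_trans hij hj⟩) (p.get ⟨j, hj⟩)) :
    (G.ProperPathFromTo X Y (p.take (i + 1) ++ p.drop j) ∧
      G.BNonCausal (p.take (i + 1) ++ p.drop j)) ∧
    (G.ProperPathFromTo X Y p ∧ G.BNonCausal p) :=
  stmt8_general G D X Y Z hamen hforb hD hrep p hp hnc hconn i j h0 hij hj hadj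
end

section
/- Let C_l → C ← C_r be a collider on a definite status path in a maximal PDAG G with C_l and C_r non-adjacent, and suppose C − S is an undirected edge in G for some node S. Then G contains both C_l → S and C_r → S. (In particular, a shortest b-possibly causal definite status path from such a collider C to any set Z must start with a directed edge out of C, hence is causal.) -/
/-- if `C_l → C ← C_r` is an unshielded collider in a maximal PDAG `G`
and `C − S` is undirected, then `G` contains both `C_l → S` and `C_r → S`. -/
theorem stmt15 {V : Type} (G : PDAG V) (hG : G.ClosedMeek)
    (Cl C Cr S : V) (h1 : G.dir Cl C) (h2 : G.dir Cr C)
    (hna : ¬ G.adj Cl Cr) (hS : G.undirE C S) :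
    G.dir Cl S ∧ G.dir Cr S := by
  obtain ⟨R1, R2, R3, _R4⟩ := hG
  -- normalize the undirected edge
  have hu : G.undir C S := by
    rcases hS with h | h
    · exact h
    · exact G.undir_symm h
  have hCS : G.undirE C S := Or.inl hu
  have hnCS : ¬ G.dir S C := fun h => G.dir_not_undir S C h (G.undir_symm hu)
  have hnrl : ¬ G.adj Cr Cl := by
    intro h
    apply hna
    rcases h with h | h | h | h
    · exact Or.inr (Or.inl h)
    · exact Or.inl h
    · exact Or.inr (Or.inr (Or.inr h))
    · exact Or.inr (Or.inr (Or.inl h))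
  -- each of Cl, Cr: either dir into S, or undirected with S
  have key : ∀ X, G.dir X C → ¬ G.adj X S → False := by
    intro X hX hadj
    exact G.dir_not_undir C S (R1 X C S hX hCS hadj) hu
  have step : ∀ X, G.dir X C → G.dir X S ∨ G.undirE X S := by
    intro X hX
    by_cases hadj : G.adj X S
    · rcases hadj with h | h | h
      · exact Or.inl h
      · exact absurd (R2 S X C h hX hCS.symm) hnCS
      · exact Or.inr h
    · exact absurd hadj (fun h => key X hX h)
  have hl := step Cl h1
  have hr := step Cr h2
  -- rule out the undirected cases
  have ruleout : ∀ A B, G.dir A C → G.dir B C → ¬ G.adj A B → G.undirE A S →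
      G.dir B S → False := by
    intro A B hA hB hAB hAS hBS
    -- R1 at B → S − A gives S → A, then R2 gives S → C, contradiction
    have hSA : G.undirE S A := hAS.symm
    have hnBA : ¬ G.adj B A := by
      intro h
      apply hAB
      rcases h with h | h | h | h
      · exact Or.inr (Or.inl h)
      · exact Or.inl h
      · exact Or.inr (Or.inr (Or.inr h))
      · exact Or.inr (Or.inr (Or.inl h))
    have h1' : G.dir S A := R1 B S A hBS hSA hnBA
    exact hnCS (R2 S A C h1' hA hCS.symm)
  rcases hl with hl | hl
  · rcases hr with hr | hr
    · exact ⟨hl, hr⟩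
    · exact absurd (ruleout Cr Cl h2 h1 hnrl hr hl) (fun h => h)
  · rcases hr with hr | hr
    · exact absurd (ruleout Cl Cr h1 h2 hna hl hr) (fun h => h)
    · -- both undirected: R3 with a = S gives S → C, contradiction
      exact absurd (R3 S C Cl Cr hCS.symm hl.symm hr.symm h1 h2 hna) hnCS
end
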